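/- arXiv:1412.7025 — 4 statements merged into one kernel-verified Lean document; each statement's English description precedes it below -/
import Mathlib

section
/- Let G = (A ⊔ B, E) be a finite bipartite graph with nonempty edge set E ⊆ A × B. Then there exist nonempty subsets A' ⊆ A and B' ⊆ B such that in the induced subgraph G' = (A' ⊔ B', E'): every vertex of A' has degree at least |E|/(4|A|), every vertex of B' has degree at least |E|/(4|B|), and |E'| ≥ |E|/2. -/
/-!
Weight each vertex of `A` by `c_A = |E|/(4|A|)` and each vertex of `B` by `c_B = |E|/(4|B|)`, and
among all pairs `A' ⊆ A`, `B' ⊆ B` maximise the potential `|E(A', B')| - c_A |A'| - c_B |B'|`.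
Deleting a vertex whose degree is below its weight would strictly increase the potential, so the
maximiser has the required minimum degrees; and its potential is at least that of `(A, B)`,
namely `|E| - |E|/4 - |E|/4 = |E|/2`, which bounds `|E(A', B')|` from below.
-/

open scoped Classical

namespace Bipartite

variable {α β : Type*} (E : Finset (α × β))

theorem card_edges_eq_degree_fst_add_erase {A' : Finset α} (B' : Finset β) {a : α}
    (ha : a ∈ A') :
    (E.filter (fun e => e.1 ∈ A' ∧ e.2 ∈ B')).card
      = (E.filter (fun e => e.1 = a ∧ e.2 ∈ B')).card
        + (E.filter (fun e => e.1 ∈ A'.erase a ∧ e.2 ∈ B')).card := by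
  rw [← Finset.card_filter_add_card_filter_not (fun e => e.1 = a), Finset.filter_filter,
    Finset.filter_filter]
  congr 2 <;> ext e <;> simp only [Finset.mem_filter, Finset.mem_erase] <;> grind

theorem card_edges_eq_degree_snd_add_erase (A' : Finset α) {B' : Finset β} {b : β}
    (hb : b ∈ B') :
    (E.filter (fun e => e.1 ∈ A' ∧ e.2 ∈ B')).card
      = (E.filter (fun e => e.2 = b ∧ e.1 ∈ A')).card
        + (E.filter (fun e => e.1 ∈ A' ∧ e.2 ∈ B'.erase b)).card := by
  rw [← Finset.card_filter_add_card_filter_not (fun e => e.2 = b), Finset.filter_filter,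
    Finset.filter_filter]
  congr 2 <;> ext e <;> simp only [Finset.mem_filter, Finset.mem_erase] <;> grind

theorem exists_subsets_le_degree (A : Finset α) (B : Finset β) {cA cB : ℝ}
    (hcA : 0 ≤ cA) (hcB : 0 ≤ cB) :
    ∃ A' ⊆ A, ∃ B' ⊆ B,
      (∀ a ∈ A', cA ≤ ((E.filter (fun e => e.1 = a ∧ e.2 ∈ B')).card : ℝ)) ∧
      (∀ b ∈ B', cB ≤ ((E.filter (fun e => e.2 = b ∧ e.1 ∈ A')).card : ℝ)) ∧
      ((E.filter (fun e => e.1 ∈ A ∧ e.2 ∈ B)).card : ℝ) - cA * A.card - cB * B.card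
        ≤ ((E.filter (fun e => e.1 ∈ A' ∧ e.2 ∈ B')).card : ℝ) := by
  let potential (p : Finset α × Finset β) : ℝ :=
    (E.filter (fun e => e.1 ∈ p.1 ∧ e.2 ∈ p.2)).card - cA * p.1.card - cB * p.2.card
  obtain ⟨⟨A', B'⟩, hmem, hmax⟩ :=
    (A.powerset ×ˢ B.powerset).exists_max_image potential ⟨(A, B), by simp⟩
  simp only [Finset.mem_product, Finset.mem_powerset] at hmem hmax
  obtain ⟨hA', hB'⟩ := hmem
  refine ⟨A', hA', B', hB', fun a ha => ?_, fun b hb => ?_, ?_⟩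
  · by_contra! hlow
    have hsplit := congrArg (Nat.cast (R := ℝ)) (card_edges_eq_degree_fst_add_erase E B' ha)
    have hcard := congrArg (Nat.cast (R := ℝ)) (Finset.card_erase_add_one ha)
    have := hmax (A'.erase a, B') ⟨(Finset.erase_subset a A').trans hA', hB'⟩
    push_cast at hsplit hcard
    simp only [potential] at this
    nlinarith
  · by_contra! hlow
    have hsplit := congrArg (Nat.cast (R := ℝ)) (card_edges_eq_degree_snd_add_erase E A' hb)
    have hcard := congrArg (Nat.cast (R := ℝ)) (Finset.card_erase_add_one hb)
    have := hmax (A', B'.erase b) ⟨hA', (Finset.erase_subset b B').trans hB'⟩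
    push_cast at hsplit hcard
    simp only [potential] at this
    nlinarith
  · have := hmax (A, B) ⟨subset_rfl, subset_rfl⟩
    simp only [potential] at this
    nlinarith [mul_nonneg hcA (A'.card.cast_nonneg (α := ℝ)),
      mul_nonneg hcB (B'.card.cast_nonneg (α := ℝ))]

end Bipartite

theorem stmt0 {α β : Type*} (A : Finset α) (B : Finset β) (E : Finset (α × β))
    (hE : E ⊆ A ×ˢ B) (hne : E.Nonempty) :
    ∃ A' ⊆ A, ∃ B' ⊆ B, A'.Nonempty ∧ B'.Nonempty ∧
      (∀ a ∈ A', (E.card : ℝ) / (4 * A.card) ≤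
        ((E.filter (fun e => e.1 = a ∧ e.2 ∈ B')).card : ℝ)) ∧
      (∀ b ∈ B', (E.card : ℝ) / (4 * B.card) ≤
        ((E.filter (fun e => e.2 = b ∧ e.1 ∈ A')).card : ℝ)) ∧
      (E.card : ℝ) / 2 ≤ ((E.filter (fun e => e.1 ∈ A' ∧ e.2 ∈ B')).card : ℝ) := by
  obtain ⟨e₀, he₀⟩ := hne
  have hA : (A.card : ℝ) ≠ 0 := by
    exact_mod_cast (Finset.card_pos.mpr ⟨e₀.1, (Finset.mem_product.mp (hE he₀)).1⟩).ne'
  have hB : (B.card : ℝ) ≠ 0 := by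
    exact_mod_cast (Finset.card_pos.mpr ⟨e₀.2, (Finset.mem_product.mp (hE he₀)).2⟩).ne'
  have hAB : E.filter (fun e => e.1 ∈ A ∧ e.2 ∈ B) = E :=
    Finset.filter_true_of_mem fun e he => Finset.mem_product.mp (hE he)
  obtain ⟨A', hA', B', hB', hdegA, hdegB, hcard⟩ :=
    Bipartite.exists_subsets_le_degree E A B (cA := E.card / (4 * A.card))
      (cB := E.card / (4 * B.card)) (by positivity) (by positivity)
  have hhalf : (E.card : ℝ) / 2 ≤ (E.filter (fun e => e.1 ∈ A' ∧ e.2 ∈ B')).card := by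
    rw [hAB] at hcard
    field_simp at hcard ⊢
    linarith
  obtain ⟨e, he⟩ : (E.filter (fun e => e.1 ∈ A' ∧ e.2 ∈ B')).Nonempty := by
    rw [← Finset.card_pos, ← Nat.cast_pos (α := ℝ)]
    have : (0 : ℝ) < E.card := by exact_mod_cast Finset.card_pos.mpr ⟨e₀, he₀⟩
    linarith
  exact ⟨A', hA', B', hB', ⟨e.1, (Finset.mem_filter.mp he).2.1⟩,
    ⟨e.2, (Finset.mem_filter.mp he).2.2⟩, hdegA, hdegB, hhalf⟩
end

section
/- Let g be a nonzero polynomial on ℝ^d and let L be a finite set of lines such that g vanishes identically on every line of L. Suppose deg g < r, each line of L contains at least r points of a finite set P_Z, and every point of P_Z is a joint of L (the directions of the lines of L through it span ℝ^d). If additionally g has minimal degree among nonzero polynomials vanishing on all lines of L, then the gradient ∇g vanishes identically on the zero locus of g restricted to each line of L; in particular, every partial derivative ∂g/∂x_j vanishes on all lines of L. -/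
open scoped Classical
open Matrix

/-- The line through `a` with direction `v` in `ℝ^d`. -/
def lineSet {d : ℕ} (a v : Fin d → ℝ) : Set (Fin d → ℝ) := {x | ∃ t : ℝ, x = a + t • v}


open Polynomial in
lemma aux_natDegree_aeval_le {d : ℕ} (f : Fin d → Polynomial ℝ)
    (hf : ∀ i, (f i).natDegree ≤ 1) (p : MvPolynomial (Fin d) ℝ) :
    (MvPolynomial.aeval f p).natDegree ≤ p.totalDegree := by
  conv_lhs => rw [p.as_sum]
  rw [map_sum]
  apply Polynomial.natDegree_sum_le_of_forall_le
  intro s hs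
  rw [MvPolynomial.aeval_monomial]
  refine (Polynomial.natDegree_mul_le).trans ?_
  have h1 : (algebraMap ℝ ℝ[X] (MvPolynomial.coeff s p)).natDegree = 0 := by
    simp [Polynomial.natDegree_C]
  rw [h1, zero_add]
  refine le_trans ?_ (MvPolynomial.le_totalDegree hs)
  rw [Finsupp.prod]
  refine (Polynomial.natDegree_prod_le _ _).trans ?_
  rw [Finsupp.sum]
  apply Finset.sum_le_sum
  intro i _
  exact (Polynomial.natDegree_pow_le).trans (by
    calc s i * (f i).natDegree ≤ s i * 1 := Nat.mul_le_mul_left _ (hf i)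
    _ = s i := Nat.mul_one _)

lemma aux_totalDegree_pderiv_le {d : ℕ} (j : Fin d) (p : MvPolynomial (Fin d) ℝ) :
    (MvPolynomial.pderiv j p).totalDegree ≤ p.totalDegree := by
  conv_lhs => rw [p.as_sum]
  rw [map_sum]
  apply MvPolynomial.totalDegree_finsetSum_le
  intro s hs
  rw [MvPolynomial.pderiv_monomial]
  refine (MvPolynomial.totalDegree_monomial_le _ _).trans ?_
  refine le_trans ?_ (MvPolynomial.le_totalDegree hs)
  rw [Finsupp.sum_fintype _ _ (fun _ => rfl), Finsupp.sum_fintype _ _ (fun _ => rfl)]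
  exact Finset.sum_le_sum fun i _ => by simp [tsub_le_self]

open Polynomial in
lemma aux_deriv_aeval {d : ℕ} (f : Fin d → Polynomial ℝ) (p : MvPolynomial (Fin d) ℝ) :
    Polynomial.derivative (MvPolynomial.aeval f p)
      = ∑ i : Fin d, MvPolynomial.aeval f (MvPolynomial.pderiv i p) * Polynomial.derivative (f i) := by
  induction p using MvPolynomial.induction_on with
  | C a => simp
  | add p q hp hq => simp [hp, hq, Finset.sum_add_distrib, add_mul]
  | mul_X p n hp =>
    simp only [_root_.map_mul, _root_.map_add, MvPolynomial.aeval_X, Polynomial.derivative_mul,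
      hp, MvPolynomial.pderiv_mul, MvPolynomial.pderiv_X, add_mul, Pi.single_apply,
      apply_ite (MvPolynomial.aeval f), _root_.map_one, _root_.map_zero, ite_mul, one_mul, zero_mul, mul_ite,
      mul_zero, mul_one]
    rw [Finset.sum_add_distrib, Finset.sum_mul, Finset.sum_ite_eq Finset.univ n
      (fun x => MvPolynomial.aeval f p * Polynomial.derivative (f x))]
    simp only [Finset.mem_univ, if_true]
    refine congrArg (· + _) ?_
    exact Finset.sum_congr rfl fun i _ => by ring

/-- The restriction of a multivariate polynomial to a line, as a univariate polynomial. -/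
noncomputable def lineRes {d : ℕ} (a v : Fin d → ℝ) (p : MvPolynomial (Fin d) ℝ) : Polynomial ℝ :=
  MvPolynomial.aeval (fun i => Polynomial.C (a i) + Polynomial.C (v i) * Polynomial.X) p

lemma lineRes_eval {d : ℕ} (a v : Fin d → ℝ) (p : MvPolynomial (Fin d) ℝ) (t : ℝ) :
    (lineRes a v p).eval t = MvPolynomial.eval (a + t • v) p := by
  induction p using MvPolynomial.induction_on with
  | C c => simp [lineRes]
  | add p q hp hq =>
    simp only [lineRes, _root_.map_add, Polynomial.eval_add, MvPolynomial.eval_add] at *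
    rw [hp, hq]
  | mul_X p n hp =>
    simp only [lineRes, _root_.map_mul, Polynomial.eval_mul, MvPolynomial.aeval_X,
      MvPolynomial.eval_mul, MvPolynomial.eval_X] at *
    rw [hp]
    simp only [Polynomial.eval_add, Polynomial.eval_mul, Polynomial.eval_C, Polynomial.eval_X,
      Pi.add_apply, Pi.smul_apply, smul_eq_mul]
    ring

lemma lineRes_natDegree_le {d : ℕ} (a v : Fin d → ℝ) (p : MvPolynomial (Fin d) ℝ) :
    (lineRes a v p).natDegree ≤ p.totalDegree := by
  apply aux_natDegree_aeval_le
  intro i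
  refine (Polynomial.natDegree_add_le _ _).trans (max_le (by simp) ?_)
  exact (Polynomial.natDegree_C_mul_le _ _).trans (by simp)

lemma lineRes_zero_of_vanish {d : ℕ} (a v : Fin d → ℝ) (p : MvPolynomial (Fin d) ℝ)
    (h : ∀ t : ℝ, MvPolynomial.eval (a + t • v) p = 0) : lineRes a v p = 0 := by
  apply Polynomial.funext
  intro t
  rw [lineRes_eval]
  simp [h t]

lemma deriv_lineRes {d : ℕ} (a v : Fin d → ℝ) (p : MvPolynomial (Fin d) ℝ) :
    Polynomial.derivative (lineRes a v p)
      = ∑ i : Fin d, lineRes a v (MvPolynomial.pderiv i p) * Polynomial.C (v i) := by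
  rw [lineRes, aux_deriv_aeval]
  congr 1
  funext i
  simp [lineRes]

theorem stmt4 {d : ℕ} (g : MvPolynomial (Fin d) ℝ) (hg : g ≠ 0)
    (L : Finset ((Fin d → ℝ) × (Fin d → ℝ))) (hL : ∀ ℓ ∈ L, ℓ.2 ≠ 0)
    (hvan : ∀ ℓ ∈ L, ∀ t : ℝ, MvPolynomial.eval (ℓ.1 + t • ℓ.2) g = 0)
    (r : ℕ) (hdeg : g.totalDegree < r)
    (PZ : Finset (Fin d → ℝ))
    (hrich : ∀ ℓ ∈ L, r ≤ (PZ.filter (fun x => x ∈ lineSet ℓ.1 ℓ.2)).card)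
    (hjoint : ∀ p ∈ PZ,
      Submodule.span ℝ {w : Fin d → ℝ | ∃ ℓ ∈ L, ℓ.2 = w ∧ p ∈ lineSet ℓ.1 ℓ.2} = ⊤)
    (hmin : ∀ h : MvPolynomial (Fin d) ℝ, h ≠ 0 →
      (∀ ℓ ∈ L, ∀ t : ℝ, MvPolynomial.eval (ℓ.1 + t • ℓ.2) h = 0) →
      g.totalDegree ≤ h.totalDegree) :
    ∀ j : Fin d, ∀ ℓ ∈ L, ∀ t : ℝ,
      MvPolynomial.eval (ℓ.1 + t • ℓ.2) (MvPolynomial.pderiv j g) = 0 := by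
  -- Step 1: all partial derivatives of g vanish at every point of PZ.
  have step1 : ∀ p ∈ PZ, ∀ k : Fin d, MvPolynomial.eval p (MvPolynomial.pderiv k g) = 0 := by
    intro p hp k
    set φ : (Fin d → ℝ) →ₗ[ℝ] ℝ :=
      ∑ i : Fin d, MvPolynomial.eval p (MvPolynomial.pderiv i g) •
        LinearMap.proj (R := ℝ) (φ := fun _ : Fin d => ℝ) i with hφ
    have hker : {w : Fin d → ℝ | ∃ ℓ ∈ L, ℓ.2 = w ∧ p ∈ lineSet ℓ.1 ℓ.2} ⊆
        (LinearMap.ker φ : Set (Fin d → ℝ)) := by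
      rintro w ⟨ℓ, hℓ, rfl, t₀, hpt⟩
      have hq : lineRes ℓ.1 ℓ.2 g = 0 := lineRes_zero_of_vanish _ _ _ (hvan ℓ hℓ)
      have hdq : (∑ i : Fin d, lineRes ℓ.1 ℓ.2 (MvPolynomial.pderiv i g) * Polynomial.C (ℓ.2 i)) = 0 := by
        rw [← deriv_lineRes, hq, map_zero]
      have := congrArg (Polynomial.eval t₀) hdq
      simp only [Polynomial.eval_finset_sum, Polynomial.eval_mul, Polynomial.eval_C,
        Polynomial.eval_zero, lineRes_eval] at this
      simp only [SetLike.mem_coe, LinearMap.mem_ker, hφ, LinearMap.sum_apply,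
        LinearMap.smul_apply, LinearMap.proj_apply, smul_eq_mul]
      rw [← hpt] at this
      exact this
    have htop : (⊤ : Submodule ℝ (Fin d → ℝ)) ≤ LinearMap.ker φ := by
      rw [← hjoint p hp]
      exact Submodule.span_le.mpr hker
    have hφ0 : φ (Pi.single k 1) = 0 := htop (Submodule.mem_top) 
    rw [hφ] at hφ0
    simp only [LinearMap.sum_apply, LinearMap.smul_apply, LinearMap.proj_apply,
      smul_eq_mul, Pi.single_apply] at hφ0
    rw [Finset.sum_congr rfl (fun i _ => by
        rw [show (MvPolynomial.eval p) ((MvPolynomial.pderiv i) g) * (if i = k then (1:ℝ) else 0)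
          = if i = k then (MvPolynomial.eval p) ((MvPolynomial.pderiv i) g) else 0 from by
            split <;> simp]),
      Finset.sum_ite_eq' Finset.univ k] at hφ0
    simpa using hφ0
  -- Step 2: each partial derivative vanishes on each line.
  intro j ℓ hℓ t
  have hq0 : lineRes ℓ.1 ℓ.2 (MvPolynomial.pderiv j g) = 0 := by
    set S := PZ.filter (fun x => x ∈ lineSet ℓ.1 ℓ.2) with hS
    have tOf : ∀ x : {x // x ∈ S}, ∃ t : ℝ, (x : Fin d → ℝ) = ℓ.1 + t • ℓ.2 := by
      rintro ⟨x, hx⟩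
      exact (Finset.mem_filter.mp hx).2
    choose tf htf using tOf
    have hinj : Function.Injective tf := by
      intro x y hxy
      have : (x : Fin d → ℝ) = y := by rw [htf x, htf y, hxy]
      exact Subtype.ext this
    apply Polynomial.eq_zero_of_natDegree_lt_card_of_eval_eq_zero _ hinj
    · intro x
      have hx := Finset.mem_filter.mp x.2
      rw [lineRes_eval, show ℓ.1 + tf x • ℓ.2 = (x : Fin d → ℝ) from (htf x).symm]
      exact step1 _ hx.1 j
    · calc (lineRes ℓ.1 ℓ.2 (MvPolynomial.pderiv j g)).natDegree
          ≤ (MvPolynomial.pderiv j g).totalDegree := lineRes_natDegree_le _ _ _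
        _ ≤ g.totalDegree := aux_totalDegree_pderiv_le _ _
        _ < r := hdeg
        _ ≤ S.card := hrich ℓ hℓ
        _ = Fintype.card {x // x ∈ S} := (Fintype.card_coe S).symm
  have := congrArg (Polynomial.eval t) hq0
  rwa [lineRes_eval, Polynomial.eval_zero] at this
end

section
/- Suppose every line in a finite family L in ℝ^d contains at least r points of a finite set P, a polynomial f of degree m < r/2 has cells C₁, …, C_M partitioning the complement of its zero set, each line meets at most m cells, and a line ℓ ∈ L satisfies |ℓ ∩ P ∩ C_i| ≤ 1 for all i. Then ℓ contains more than m points of P in the zero set of f, and hence f vanishes identically on ℓ. -/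
/-!
The points of `P` on `ℓ` off the zero set of `f` lie in the cells met by `ℓ`, at most one per
cell, so there are at most `m` of them; as `ℓ` carries at least `r > 2m` points of `P`, more than
`m` of them are zeros of `f`. Restricted to `ℓ`, `f` is a univariate polynomial of degree at most
`m` with more than `m` roots, hence zero.
-/

open scoped Classical

section LineRestriction

open Polynomial

variable {σ R : Type*} [CommRing R]

noncomputable def lineRestriction (f : MvPolynomial σ R) (a v : σ → R) : R[X] :=
  MvPolynomial.aeval (fun i => C (v i) * X + C (a i)) f

theorem eval_lineRestriction (f : MvPolynomial σ R) (a v : σ → R) (t : R) :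
    (lineRestriction f a v).eval t = MvPolynomial.eval (a + t • v) f := by
  induction f using MvPolynomial.induction_on with
  | C c => simp [lineRestriction]
  | add p q hp hq => simp_all [lineRestriction]
  | mul_X p i hp =>
    rw [lineRestriction] at hp
    simp only [lineRestriction, map_mul, MvPolynomial.aeval_X, eval_mul, eval_add, eval_C, eval_X,
      MvPolynomial.eval_X, Pi.add_apply, Pi.smul_apply, smul_eq_mul, hp]
    ring

theorem natDegree_aeval_le_totalDegree (f : MvPolynomial σ R) {g : σ → R[X]}
    (hg : ∀ i, (g i).natDegree ≤ 1) : (MvPolynomial.aeval g f).natDegree ≤ f.totalDegree := by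
  conv_lhs => rw [f.as_sum, map_sum]
  refine natDegree_sum_le_of_forall_le _ _ fun s hs => ?_
  rw [MvPolynomial.aeval_monomial]
  refine natDegree_C_mul_le _ _ |>.trans <| natDegree_prod_le _ _ |>.trans ?_
  calc ∑ i ∈ s.support, (g i ^ s i).natDegree ≤ ∑ i ∈ s.support, s i :=
        Finset.sum_le_sum fun i _ =>
          natDegree_pow_le.trans (by simpa using Nat.mul_le_mul_left (s i) (hg i))
    _ ≤ f.totalDegree := MvPolynomial.le_totalDegree hs

theorem natDegree_lineRestriction_le (f : MvPolynomial σ R) (a v : σ → R) :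
    (lineRestriction f a v).natDegree ≤ f.totalDegree :=
  natDegree_aeval_le_totalDegree f fun _ => natDegree_linear_le

end LineRestriction

theorem eval_line_eq_zero_of_totalDegree_lt_card {d : ℕ} (f : MvPolynomial (Fin d) ℝ)
    (a v : Fin d → ℝ) (Z : Finset (Fin d → ℝ))
    (hZ : ∀ x ∈ Z, x ∈ lineSet a v ∧ MvPolynomial.eval x f = 0) (hcard : f.totalDegree < Z.card)
    (t : ℝ) : MvPolynomial.eval (a + t • v) f = 0 := by
  choose s hs using fun x : Z => (hZ x x.2).1
  have hinj : Function.Injective s := fun x y h => Subtype.ext <| by rw [hs x, hs y, h]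
  have hzero : lineRestriction f a v = 0 := by
    refine Polynomial.eq_zero_of_natDegree_lt_card_of_eval_eq_zero _ hinj (fun x => ?_) ?_
    · rw [eval_lineRestriction, ← hs]
      exact (hZ x x.2).2
    · simpa using (natDegree_lineRestriction_le f a v).trans_lt hcard
  rw [← eval_lineRestriction, hzero, Polynomial.eval_zero]

open Finset in
theorem card_filter_mem_iUnion_le {α ι : Type*} [Fintype ι] (Q : Finset α) (T : Set α)
    (cells : ι → Set α) (hone : ∀ i, #(Q.filter (· ∈ T ∩ cells i)) ≤ 1) :
    #(Q.filter fun x => x ∈ T ∧ x ∈ ⋃ i, cells i) ≤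
      #(univ.filter fun i => (T ∩ cells i).Nonempty) := by
  calc #(Q.filter fun x => x ∈ T ∧ x ∈ ⋃ i, cells i)
      ≤ #((univ.filter fun i => (T ∩ cells i).Nonempty).biUnion
          fun i => Q.filter (· ∈ T ∩ cells i)) := by
        refine card_le_card fun x hx => ?_
        simp only [mem_filter, Set.mem_iUnion] at hx
        obtain ⟨hxQ, hxT, i, hi⟩ := hx
        exact mem_biUnion.2 ⟨i, mem_filter.2 ⟨mem_univ _, x, hxT, hi⟩, mem_filter.2 ⟨hxQ, hxT, hi⟩⟩
    _ ≤ ∑ i ∈ univ.filter fun i => (T ∩ cells i).Nonempty, #(Q.filter (· ∈ T ∩ cells i)) :=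
        card_biUnion_le
    _ ≤ ∑ _i ∈ univ.filter fun i => (T ∩ cells i).Nonempty, 1 := sum_le_sum fun i _ => hone i
    _ = #(univ.filter fun i => (T ∩ cells i).Nonempty) := by rw [card_eq_sum_ones]

theorem stmt10_general {d m M r : ℕ} (P : Finset (Fin d → ℝ))
    (L : Finset ((Fin d → ℝ) × (Fin d → ℝ)))
    (hrich : ∀ ℓ ∈ L, r ≤ (P.filter (fun x => x ∈ lineSet ℓ.1 ℓ.2)).card)
    (f : MvPolynomial (Fin d) ℝ) (hdeg : f.totalDegree ≤ m) (hmr : 2 * m < r)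
    (cells : Fin M → Set (Fin d → ℝ))
    (hcover : (⋃ i, cells i) = {x | MvPolynomial.eval x f ≠ 0})
    (ℓ : (Fin d → ℝ) × (Fin d → ℝ)) (hℓ : ℓ ∈ L)
    (hmeets : (Finset.univ.filter
      (fun i : Fin M => (lineSet ℓ.1 ℓ.2 ∩ cells i).Nonempty)).card ≤ m)
    (hone : ∀ i, (P.filter (fun x => x ∈ lineSet ℓ.1 ℓ.2 ∩ cells i)).card ≤ 1) :
    m < (P.filter
        (fun x => x ∈ lineSet ℓ.1 ℓ.2 ∧ MvPolynomial.eval x f = 0)).card ∧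
      ∀ t : ℝ, MvPolynomial.eval (ℓ.1 + t • ℓ.2) f = 0 := by
  have hoff : (P.filter fun x => x ∈ lineSet ℓ.1 ℓ.2 ∧ MvPolynomial.eval x f ≠ 0).card ≤ m := by
    have := card_filter_mem_iUnion_le P (lineSet ℓ.1 ℓ.2) cells hone
    simp only [hcover, Set.mem_ofPred_eq] at this
    exact this.trans hmeets
  have hsplit : (P.filter fun x => x ∈ lineSet ℓ.1 ℓ.2 ∧ MvPolynomial.eval x f = 0).card +
      (P.filter fun x => x ∈ lineSet ℓ.1 ℓ.2 ∧ MvPolynomial.eval x f ≠ 0).card =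
      (P.filter (· ∈ lineSet ℓ.1 ℓ.2)).card := by
    rw [← Finset.filter_filter, ← Finset.filter_filter]
    exact Finset.card_filter_add_card_filter_not _
  have hzeros : m < (P.filter fun x => x ∈ lineSet ℓ.1 ℓ.2 ∧ MvPolynomial.eval x f = 0).card := by
    have := hrich ℓ hℓ
    omega
  exact ⟨hzeros, eval_line_eq_zero_of_totalDegree_lt_card f _ _ _
    (fun _ hx => (Finset.mem_filter.1 hx).2) (hdeg.trans_lt hzeros)⟩

theorem stmt10 {d m M r : ℕ} (P : Finset (Fin d → ℝ))
    (L : Finset ((Fin d → ℝ) × (Fin d → ℝ)))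
    (hrich : ∀ ℓ ∈ L, r ≤ (P.filter (fun x => x ∈ lineSet ℓ.1 ℓ.2)).card)
    (f : MvPolynomial (Fin d) ℝ) (hdeg : f.totalDegree ≤ m) (hmr : 2 * m < r)
    (cells : Fin M → Set (Fin d → ℝ))
    (hcover : (⋃ i, cells i) = {x | MvPolynomial.eval x f ≠ 0})
    (ℓ : (Fin d → ℝ) × (Fin d → ℝ)) (hℓ : ℓ ∈ L) (hv : ℓ.2 ≠ 0)
    (hmeets : (Finset.univ.filter
      (fun i : Fin M => (lineSet ℓ.1 ℓ.2 ∩ cells i).Nonempty)).card ≤ m)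
    (hone : ∀ i, (P.filter (fun x => x ∈ lineSet ℓ.1 ℓ.2 ∩ cells i)).card ≤ 1) :
    m < (P.filter
        (fun x => x ∈ lineSet ℓ.1 ℓ.2 ∧ MvPolynomial.eval x f = 0)).card ∧
      ∀ t : ℝ, MvPolynomial.eval (ℓ.1 + t • ℓ.2) f = 0 :=
  stmt10_general P L hrich f hdeg hmr cells hcover ℓ hℓ hmeets hone
end

section
/- Let g be a nonzero polynomial on ℝ^d of minimal degree among nonzero polynomials vanishing on every line of a finite family L, where each line of L contains at least r > deg g points of a finite set P. If some partial derivative ∂g/∂x_j is not identically zero and vanishes at every point of P lying on lines of L, then ∂g/∂x_j vanishes on every line of L, contradicting minimality; hence not every point of P on the lines of L can be a joint of L. -/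
/-!
Restrict a polynomial `g` vanishing on a line `a + t • v` to that line: the restriction is the
zero polynomial in `t`, so its derivative `t ↦ v ⬝ᵥ ∇g(a + t • v)` vanishes too. At a joint the
directions of the lines through it span, hence `∇g = 0` there. Thus every `∂g/∂xⱼ` vanishes at the
`≥ r > deg ∂g/∂xⱼ` points of `P` on each line, hence on the whole line. Some `∂g/∂xⱼ` is nonzero
because `g` is not constant, and it has smaller degree than `g`, contradicting minimality.
-/

open scoped Classical
open Matrix

open Finset
open scoped Polynomial

namespace MvPolynomial

variable {σ R : Type*}

section CommSemiring

variable [CommSemiring R]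

theorem totalDegree_pderiv_lt {i : σ} {g : MvPolynomial σ R} (h : pderiv i g ≠ 0) :
    (pderiv i g).totalDegree < g.totalDegree := by
  have hsupp : ∀ m ∈ (pderiv i g).support, (m.sum fun _ e => e) < g.totalDegree := by
    intro m hm
    have hmi : m + Finsupp.single i 1 ∈ g.support := by
      rw [mem_support_iff, coeff_pderiv] at hm
      exact mem_support_iff.2 (left_ne_zero_of_mul hm)
    calc (m.sum fun _ e => e) < (m + Finsupp.single i 1).sum fun _ e => e := by
          rw [Finsupp.sum_add_index' (fun _ => rfl) (fun _ _ _ => rfl),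
            Finsupp.sum_single_index rfl]
          exact Nat.lt_succ_self _
      _ ≤ g.totalDegree := le_totalDegree hmi
  obtain ⟨m, hm⟩ := support_nonempty.2 h
  exact (Finset.sup_lt_iff ((Nat.zero_le _).trans_lt (hsupp m hm))).2 hsupp

theorem totalDegree_pderiv_le (i : σ) (g : MvPolynomial σ R) :
    (pderiv i g).totalDegree ≤ g.totalDegree := by
  by_cases h : pderiv i g = 0
  · simp [h]
  · exact (totalDegree_pderiv_lt h).le

theorem exists_pderiv_ne_zero [NoZeroDivisors R] [CharZero R] {g : MvPolynomial σ R}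
    (h : g.totalDegree ≠ 0) : ∃ j, pderiv j g ≠ 0 := by
  obtain ⟨m, hm, j, hj⟩ : ∃ m ∈ g.support, ∃ j, m j ≠ 0 := by
    simpa [totalDegree_eq_zero_iff] using h
  refine ⟨j, fun h0 => ?_⟩
  have hcoeff := coeff_pderiv (i := j) g (m - Finsupp.single j 1)
  rw [h0, coeff_zero,
    tsub_add_cancel_of_le (Finsupp.single_le_iff.2 (Nat.one_le_iff_ne_zero.2 hj))] at hcoeff
  exact mul_ne_zero (mem_support_iff.1 hm) (Nat.cast_add_one_ne_zero _) hcoeff.symm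

def VanishesOnLines (L : Set ((σ → R) × (σ → R))) (g : MvPolynomial σ R) : Prop :=
  ∀ ℓ ∈ L, ∀ t : R, eval (ℓ.1 + t • ℓ.2) g = 0

theorem totalDegree_ne_zero_of_vanishesOnLines {L : Set ((σ → R) × (σ → R))} (hL : L.Nonempty)
    {g : MvPolynomial σ R} (hg : g ≠ 0) (hvan : VanishesOnLines L g) : g.totalDegree ≠ 0 := by
  intro h0
  obtain ⟨ℓ, hℓ⟩ := hL
  have hconst := totalDegree_eq_zero_iff_eq_C.1 h0
  have hcoeff := hvan ℓ hℓ 0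
  rw [hconst, eval_C] at hcoeff
  exact hg (by rw [hconst, hcoeff, map_zero])

noncomputable def restrictLine (a v : σ → R) : MvPolynomial σ R →ₐ[R] R[X] :=
  aeval fun i => Polynomial.C (v i) * Polynomial.X + Polynomial.C (a i)

theorem restrictLine_X (a v : σ → R) (i : σ) :
    restrictLine a v (X i) = Polynomial.C (v i) * Polynomial.X + Polynomial.C (a i) :=
  aeval_X _ _

theorem eval_restrictLine (a v : σ → R) (g : MvPolynomial σ R) (t : R) :
    (restrictLine a v g).eval t = eval (a + t • v) g := by
  induction g using MvPolynomial.induction_on with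
  | C c => simp [restrictLine]
  | add p q hp hq => simp [hp, hq]
  | mul_X p i hp =>
    simp only [map_mul, Polynomial.eval_mul, hp, restrictLine_X, eval_X, Polynomial.eval_add,
      Polynomial.eval_C, Polynomial.eval_X, Pi.add_apply, Pi.smul_apply, smul_eq_mul]
    ring

theorem natDegree_restrictLine_le (a v : σ → R) (g : MvPolynomial σ R) :
    (restrictLine a v g).natDegree ≤ g.totalDegree :=
  (aeval_natDegree_le g le_rfl _ fun _ => Polynomial.natDegree_linear_le).trans_eq (mul_one _)

noncomputable def evalGradient (p : σ → R) (g : MvPolynomial σ R) : σ → R :=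
  fun i => eval p (pderiv i g)

variable [Fintype σ]

theorem derivative_restrictLine (a v : σ → R) (g : MvPolynomial σ R) :
    Polynomial.derivative (restrictLine a v g) = restrictLine a v (∑ i, v i • pderiv i g) := by
  induction g using MvPolynomial.induction_on with
  | C c => simp [restrictLine]
  | add p q hp hq => simp [hp, hq, sum_add_distrib]
  | mul_X p i hp =>
    have hleibniz : ∑ j, v j • pderiv j (p * X i) = (∑ j, v j • pderiv j p) * X i + v i • p := by
      simp [Derivation.leibniz, pderiv_X, Pi.single_apply, sum_add_distrib, sum_mul, add_comm,
        mul_comm (X i)]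
    rw [hleibniz, map_mul, Polynomial.derivative_mul, hp]
    simp only [map_sum, map_smul, Polynomial.smul_eq_C_mul, restrictLine_X,
      Polynomial.derivative_mul, Polynomial.derivative_C, zero_mul,
      Polynomial.derivative_X, mul_one, zero_add, add_zero, map_add, map_mul]
    ring

theorem eval_sum_smul_pderiv (p v : σ → R) (g : MvPolynomial σ R) :
    eval p (∑ i, v i • pderiv i g) = v ⬝ᵥ evalGradient p g := by
  simp [dotProduct, evalGradient]

end CommSemiring

theorem dotProduct_evalGradient_eq_zero [CommRing R] [IsDomain R] [Infinite R] [Fintype σ]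
    {a v : σ → R} {g : MvPolynomial σ R} (hg : ∀ t : R, eval (a + t • v) g = 0) (t : R) :
    v ⬝ᵥ evalGradient (a + t • v) g = 0 := by
  have hrestrict : restrictLine a v g = 0 :=
    Polynomial.funext fun t => by rw [eval_restrictLine, hg, Polynomial.eval_zero]
  rw [← eval_sum_smul_pderiv, ← eval_restrictLine, ← derivative_restrictLine, hrestrict,
    Polynomial.derivative_zero, Polynomial.eval_zero]

end MvPolynomial

theorem Matrix.eq_zero_of_dotProduct_eq_zero_of_span_eq_top {K ι : Type*} [CommSemiring K]
    [Fintype ι] {S : Set (ι → K)} (hS : Submodule.span K S = ⊤) {u : ι → K}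
    (h : ∀ w ∈ S, w ⬝ᵥ u = 0) : u = 0 := by
  refine dotProduct_eq_zero u fun w => ?_
  have hzero := LinearMap.ext_on hS (f := dotProductBilin K K u) (g := 0) fun w hw => by
    simpa [dotProduct_comm] using h w hw
  simpa using LinearMap.congr_fun hzero w

open MvPolynomial

def IsJoint {d : ℕ} (L : Set ((Fin d → ℝ) × (Fin d → ℝ))) (p : Fin d → ℝ) : Prop :=
  Submodule.span ℝ {w : Fin d → ℝ | ∃ ℓ ∈ L, ℓ.2 = w ∧ p ∈ lineSet ℓ.1 ℓ.2} = ⊤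

theorem evalGradient_eq_zero_of_isJoint {d : ℕ} {L : Set ((Fin d → ℝ) × (Fin d → ℝ))}
    {g : MvPolynomial (Fin d) ℝ} (hg : VanishesOnLines L g) {p : Fin d → ℝ} (hp : IsJoint L p) :
    evalGradient p g = 0 := by
  refine eq_zero_of_dotProduct_eq_zero_of_span_eq_top hp ?_
  rintro w ⟨ℓ, hℓ, rfl, t, rfl⟩
  exact dotProduct_evalGradient_eq_zero (hg ℓ hℓ) t

theorem eval_line_eq_zero_of_totalDegree_lt {d : ℕ} {a v : Fin d → ℝ} {S : Finset (Fin d → ℝ)}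
    {q : MvPolynomial (Fin d) ℝ}
    (hdeg : q.totalDegree < (S.filter (fun x => x ∈ lineSet a v)).card)
    (hq : ∀ x ∈ S, x ∈ lineSet a v → eval x q = 0) (t : ℝ) : eval (a + t • v) q = 0 := by
  set T := S.filter (fun x => x ∈ lineSet a v)
  have hT : ∀ x : T, ∃ s : ℝ, (x : Fin d → ℝ) = a + s • v := fun x => (mem_filter.1 x.2).2
  choose param hparam using hT
  have hrestrict : restrictLine a v q = 0 := by
    refine Polynomial.eq_zero_of_natDegree_lt_card_of_eval_eq_zero _ (f := param)
      (fun x y hxy => Subtype.ext (by rw [hparam x, hparam y, hxy])) (fun x => ?_) ?_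
    · rw [eval_restrictLine, ← hparam]
      exact hq x (mem_filter.1 x.2).1 (mem_filter.1 x.2).2
    · rw [Fintype.card_coe]
      exact (natDegree_restrictLine_le a v q).trans_lt hdeg
  rw [← eval_restrictLine, hrestrict, Polynomial.eval_zero]

theorem vanishesOnLines_pderiv {d r : ℕ} {L : Set ((Fin d → ℝ) × (Fin d → ℝ))}
    {P : Finset (Fin d → ℝ)} {g : MvPolynomial (Fin d) ℝ} (hg : VanishesOnLines L g)
    (hdeg : g.totalDegree < r)
    (hrich : ∀ ℓ ∈ L, r ≤ (P.filter (fun x => x ∈ lineSet ℓ.1 ℓ.2)).card)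
    (hjoint : ∀ p ∈ P, (∃ ℓ ∈ L, p ∈ lineSet ℓ.1 ℓ.2) → IsJoint L p) (j : Fin d) :
    VanishesOnLines L (pderiv j g) := by
  intro ℓ hℓ
  refine eval_line_eq_zero_of_totalDegree_lt
    ((totalDegree_pderiv_le j g).trans_lt (hdeg.trans_le (hrich ℓ hℓ))) fun x hx hxℓ => ?_
  exact congrFun (evalGradient_eq_zero_of_isJoint hg (hjoint x hx ⟨ℓ, hℓ, hxℓ⟩)) j

theorem stmt14_general {d r : ℕ}
    (g : MvPolynomial (Fin d) ℝ) (hg : g ≠ 0) (hdeg : g.totalDegree < r)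
    (L : Finset ((Fin d → ℝ) × (Fin d → ℝ))) (hLne : L.Nonempty)
    (hvan : ∀ ℓ ∈ L, ∀ t : ℝ, MvPolynomial.eval (ℓ.1 + t • ℓ.2) g = 0)
    (hmin : ∀ h : MvPolynomial (Fin d) ℝ, h ≠ 0 →
      (∀ ℓ ∈ L, ∀ t : ℝ, MvPolynomial.eval (ℓ.1 + t • ℓ.2) h = 0) →
      g.totalDegree ≤ h.totalDegree)
    (P : Finset (Fin d → ℝ))
    (hrich : ∀ ℓ ∈ L, r ≤ (P.filter (fun x => x ∈ lineSet ℓ.1 ℓ.2)).card) :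
    ¬ ∀ p ∈ P, (∃ ℓ ∈ L, p ∈ lineSet ℓ.1 ℓ.2) →
      Submodule.span ℝ
        {w : Fin d → ℝ | ∃ ℓ ∈ L, ℓ.2 = w ∧ p ∈ lineSet ℓ.1 ℓ.2} = ⊤ := by
  intro hjoint
  have hvanL : VanishesOnLines (L : Set ((Fin d → ℝ) × (Fin d → ℝ))) g := hvan
  obtain ⟨j, hj⟩ := exists_pderiv_ne_zero (totalDegree_ne_zero_of_vanishesOnLines hLne hg hvanL)
  exact (totalDegree_pderiv_lt hj).not_ge
    (hmin _ hj (vanishesOnLines_pderiv hvanL hdeg hrich hjoint j))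

theorem stmt14 {d r : ℕ} (hd : 1 ≤ d) (hr : 1 ≤ r)
    (g : MvPolynomial (Fin d) ℝ) (hg : g ≠ 0) (hdeg : g.totalDegree < r)
    (L : Finset ((Fin d → ℝ) × (Fin d → ℝ))) (hLne : L.Nonempty)
    (hv : ∀ ℓ ∈ L, ℓ.2 ≠ 0)
    (hvan : ∀ ℓ ∈ L, ∀ t : ℝ, MvPolynomial.eval (ℓ.1 + t • ℓ.2) g = 0)
    (hmin : ∀ h : MvPolynomial (Fin d) ℝ, h ≠ 0 →
      (∀ ℓ ∈ L, ∀ t : ℝ, MvPolynomial.eval (ℓ.1 + t • ℓ.2) h = 0) →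
      g.totalDegree ≤ h.totalDegree)
    (P : Finset (Fin d → ℝ))
    (hrich : ∀ ℓ ∈ L, r ≤ (P.filter (fun x => x ∈ lineSet ℓ.1 ℓ.2)).card) :
    ¬ ∀ p ∈ P, (∃ ℓ ∈ L, p ∈ lineSet ℓ.1 ℓ.2) →
      Submodule.span ℝ
        {w : Fin d → ℝ | ∃ ℓ ∈ L, ℓ.2 = w ∧ p ∈ lineSet ℓ.1 ℓ.2} = ⊤ :=
  stmt14_general g hg hdeg L hLne hvan hmin P hrich
end
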